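/- arXiv:2105.12490 — 6 statements merged into one kernel-verified Lean document; each statement's English description precedes it below -/
import Mathlib

section
/- Let n be an even positive integer and k a positive integer with 1 ≤ k < n/2 such that (2k+1) divides n. Then the equitable total chromatic number of the power of cycle C_n^k equals its total chromatic number, and both equal 2k + 1. -/
open SimpleGraph

/-- A total coloring of `G` with `t` colors: a vertex coloring `cv` and an edge coloring `ce`
such that adjacent vertices get distinct colors, distinct edges sharing an endpoint get
distinct colors, and every edge gets a color distinct from those of its endpoints. -/
def IsTotalColoring {V : Type*} (G : SimpleGraph V) {t : ℕ}
    (cv : V → Fin t) (ce : Sym2 V → Fin t) : Prop :=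
  (∀ u v : V, G.Adj u v → cv u ≠ cv v) ∧
  (∀ e₁ ∈ G.edgeSet, ∀ e₂ ∈ G.edgeSet, e₁ ≠ e₂ → (∃ u : V, u ∈ e₁ ∧ u ∈ e₂) →
    ce e₁ ≠ ce e₂) ∧
  (∀ e ∈ G.edgeSet, ∀ u : V, u ∈ e → ce e ≠ cv u)

/-- The total chromatic number of `G`. -/
noncomputable def totalChromaticNumber {V : Type*} (G : SimpleGraph V) : ℕ :=
  sInf {t : ℕ | ∃ cv : V → Fin t, ∃ ce : Sym2 V → Fin t, IsTotalColoring G cv ce}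

/-- The size of the color class of color `c`: vertices plus edges colored `c`. -/
noncomputable def totalClassSize {V : Type*} (G : SimpleGraph V) {t : ℕ}
    (cv : V → Fin t) (ce : Sym2 V → Fin t) (c : Fin t) : ℕ :=
  {v : V | cv v = c}.ncard + {e : Sym2 V | e ∈ G.edgeSet ∧ ce e = c}.ncard

/-- An equitable total coloring: a total coloring whose color class sizes pairwise differ
by at most one. -/
def IsEquitableTotalColoring {V : Type*} (G : SimpleGraph V) {t : ℕ}
    (cv : V → Fin t) (ce : Sym2 V → Fin t) : Prop :=
  IsTotalColoring G cv ce ∧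
  ∀ c c' : Fin t, totalClassSize G cv ce c ≤ totalClassSize G cv ce c' + 1

/-- The equitable total chromatic number of `G`. -/
noncomputable def equitableTotalChromaticNumber {V : Type*} (G : SimpleGraph V) : ℕ :=
  sInf {t : ℕ | ∃ cv : V → Fin t, ∃ ce : Sym2 V → Fin t, IsEquitableTotalColoring G cv ce}

/-- The color sum at a vertex `u`: the color of `u` plus the colors of all edges incident
with `u`, where color `c : Fin t` represents the integer color `c + 1 ∈ {1, …, t}`. -/
noncomputable def nsdSum {V : Type*} (G : SimpleGraph V) {t : ℕ}
    (cv : V → Fin t) (ce : Sym2 V → Fin t) (u : V) : ℕ :=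
  ((cv u : ℕ) + 1) + ∑ᶠ e ∈ G.incidenceSet u, ((ce e : ℕ) + 1)

/-- A neighborhood sum distinguishing total coloring: a total coloring such that adjacent
vertices have distinct color sums. -/
def IsNSDTotalColoring {V : Type*} (G : SimpleGraph V) {t : ℕ}
    (cv : V → Fin t) (ce : Sym2 V → Fin t) : Prop :=
  IsTotalColoring G cv ce ∧
  ∀ u v : V, G.Adj u v → nsdSum G cv ce u ≠ nsdSum G cv ce v

/-- The neighborhood sum distinguishing total chromatic number of `G`. -/
noncomputable def nsdTotalChromaticNumber {V : Type*} (G : SimpleGraph V) : ℕ :=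
  sInf {t : ℕ | ∃ cv : V → Fin t, ∃ ce : Sym2 V → Fin t, IsNSDTotalColoring G cv ce}

/-- The power of cycle `C_n^k`: vertices `ZMod n`, with `x ~ y` iff `x - y ≡ ±j (mod n)`
for some `1 ≤ j ≤ k`. -/
def powerOfCycle (n k : ℕ) : SimpleGraph (ZMod n) :=
  SimpleGraph.fromRel (fun x y => ∃ j : ℕ, 1 ≤ j ∧ j ≤ k ∧ x - y = (j : ZMod n))

/-- The circulant graph `Cay(ZMod n, S)`: `x ~ y` iff `x - y ∈ S` (symmetrized). -/
def cayley (n : ℕ) (S : Finset (ZMod n)) : SimpleGraph (ZMod n) :=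
  SimpleGraph.fromRel (fun x y => x - y ∈ S)

instance cayley.instDecidableRelAdj (n : ℕ) (S : Finset (ZMod n)) :
    DecidableRel (cayley n S).Adj :=
  fun x y => inferInstanceAs (Decidable (x ≠ y ∧ (x - y ∈ S ∨ y - x ∈ S)))

/-!
Let `c : ZMod n → Fin (2k+1)` be reduction modulo `2k+1`; colour the vertex `x` by `c x + c x`
and the edge `xy` by `c x + c y`. Since `c` is injective on every closed neighbourhood
`{u - k, …, u + k}` and `2` is invertible modulo `2k+1`, this is a total colouring. The
translations `x ↦ x + d` are automorphisms of `C_n^k` shifting every colour by `2 c d`, which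
takes all values, so all colour classes have the same size. Conversely, a vertex and its `2k`
incident edges already need `2k+1` colours.
-/

theorem Fin.bijective_add_self {t : ℕ} [NeZero t] (ht : Odd t) :
    Function.Bijective fun a : Fin t => a + a := by
  refine Finite.injective_iff_bijective.1 fun a b hab => Fin.ext ?_
  have h : 2 * (a : ℕ) ≡ 2 * b [MOD t] := by
    unfold Nat.ModEq; simpa [Fin.ext_iff, Fin.val_add, two_mul] using hab
  exact (h.cancel_left_of_coprime (Nat.coprime_two_right.2 ht)).eq_of_lt_of_lt a.2 b.2

theorem Int.cast_injOn_Icc {R : Type*} [AddGroupWithOne R] {m : ℕ} [CharP R m] {k : ℕ}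
    (hkm : 2 * k < m) : Set.InjOn (Int.cast : ℤ → R) (Set.Icc (-k) k) := by
  intro a ha b hb hab
  have hdvd : (m : ℤ) ∣ b - a := ((CharP.intCast_eq_intCast R m).1 hab).dvd
  have hlt : |b - a| < m := abs_lt.2 ⟨by grind, by grind⟩
  linarith [Int.eq_zero_of_abs_lt_dvd hdvd hlt]

section TotalColoring

variable {V : Type*} {G : SimpleGraph V}

theorem IsTotalColoring.card_le_of_subset_closedNbhd {t : ℕ} {cv : V → Fin t}
    {ce : Sym2 V → Fin t} (h : IsTotalColoring G cv ce) {u : V} {s : Finset V}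
    (hs : ↑s ⊆ insert u (G.neighborSet u)) : s.card ≤ t := by
  classical
  obtain ⟨-, hedge, hvert⟩ := h
  let g : V → Fin t := fun v => if v = u then cv u else ce s(u, v)
  have hg : Set.InjOn g s := by
    intro v hv w hw hvw
    rcases hs hv with rfl | huv <;> rcases hs hw with rfl | huw
    · rfl
    · simp only [g, if_pos, if_neg (G.ne_of_adj huw).symm] at hvw
      exact absurd hvw.symm (hvert _ huw v (Sym2.mem_mk_left _ _))
    · simp only [g, if_pos, if_neg (G.ne_of_adj huv).symm] at hvw
      exact absurd hvw (hvert _ huv w (Sym2.mem_mk_left _ _))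
    · simp only [g, if_neg (G.ne_of_adj huv).symm, if_neg (G.ne_of_adj huw).symm] at hvw
      by_contra hne
      exact hedge _ huv _ huw (fun h => hne (Sym2.congr_right.1 h))
        ⟨u, Sym2.mem_mk_left _ _, Sym2.mem_mk_left _ _⟩ hvw
  simpa using Finset.card_le_card_of_injOn g (fun _ _ => Finset.mem_coe.2 (Finset.mem_univ _)) hg

theorem totalChromaticNumber_eq_of_le {t : ℕ} {cv : V → Fin t} {ce : Sym2 V → Fin t}
    (h : IsTotalColoring G cv ce)
    (hle : ∀ {t'} (cv' : V → Fin t') (ce' : Sym2 V → Fin t'),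
      IsTotalColoring G cv' ce' → t ≤ t') :
    totalChromaticNumber G = t :=
  le_antisymm (Nat.sInf_le ⟨cv, ce, h⟩)
    (le_csInf ⟨t, cv, ce, h⟩ fun _ ⟨cv', ce', h'⟩ => hle cv' ce' h')

theorem equitableTotalChromaticNumber_eq_of_le {t : ℕ} {cv : V → Fin t} {ce : Sym2 V → Fin t}
    (h : IsEquitableTotalColoring G cv ce)
    (hle : ∀ {t'} (cv' : V → Fin t') (ce' : Sym2 V → Fin t'),
      IsTotalColoring G cv' ce' → t ≤ t') :
    equitableTotalChromaticNumber G = t :=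
  le_antisymm (Nat.sInf_le ⟨cv, ce, h⟩)
    (le_csInf ⟨t, cv, ce, h⟩ fun _ ⟨cv', ce', h'⟩ => hle cv' ce' h'.1)

def sym2Sum {A : Type*} [AddCommMagma A] (c : V → A) : Sym2 V → A :=
  Sym2.lift ⟨fun x y => c x + c y, fun _ _ => add_comm _ _⟩

@[simp]
theorem sym2Sum_mk {A : Type*} [AddCommMagma A] (c : V → A) (x y : V) :
    sym2Sum c s(x, y) = c x + c y :=
  rfl

section SumColoring

variable {t : ℕ} {c : V → Fin t}

theorem isTotalColoring_sym2Sum [NeZero t] (ht : Odd t)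
    (hc : ∀ u, Set.InjOn c (insert u (G.neighborSet u))) :
    IsTotalColoring G (fun x => c x + c x) (sym2Sum c) := by
  have hnbr : ∀ {u v}, G.Adj u v → c v ≠ c u := fun huv hcv =>
    G.ne_of_adj huv (hc _ (Set.mem_insert _ _) (Set.mem_insert_of_mem _ huv) hcv.symm)
  refine ⟨fun u v huv hcv => hnbr huv ((Fin.bijective_add_self ht).1 hcv).symm, ?_, ?_⟩
  · rintro e₁ he₁ e₂ he₂ hne ⟨u, hu₁, hu₂⟩ hce
    obtain ⟨v, rfl⟩ := Sym2.mem_iff_exists.1 hu₁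
    obtain ⟨w, rfl⟩ := Sym2.mem_iff_exists.1 hu₂
    exact hne (congrArg _ (hc u (Set.mem_insert_of_mem _ he₁) (Set.mem_insert_of_mem _ he₂)
      (add_left_cancel hce)))
  · rintro e he u hu hce
    obtain ⟨v, rfl⟩ := Sym2.mem_iff_exists.1 hu
    exact hnbr he (add_left_cancel hce)

theorem totalClassSize_add_of_iso {cv : V → Fin t} {ce : Sym2 V → Fin t} (f : G ≃g G)
    {δ : Fin t} (hv : ∀ x, cv (f x) = cv x + δ) (he : ∀ e, ce (e.map f) = ce e + δ)
    (γ : Fin t) : totalClassSize G cv ce (γ + δ) = totalClassSize G cv ce γ := by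
  have hvset : {x | cv x = γ} = f ⁻¹' {x | cv x = γ + δ} := by
    ext x; simp [hv]
  have heset : {e | e ∈ G.edgeSet ∧ ce e = γ} =
      Sym2.map f ⁻¹' {e | e ∈ G.edgeSet ∧ ce e = γ + δ} := by
    ext e; simp [he, f.map_mem_edgeSet_iff]
  rw [totalClassSize, totalClassSize, hvset, heset,
    Set.ncard_preimage_of_injective_subset_range f.injective (by simp [f.surjective.range_eq]),
    Set.ncard_preimage_of_injective_subset_range (Sym2.map.injective f.injective)
      fun e _ => ⟨e.map f.symm, by simp [Sym2.map_map]⟩]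

theorem isEquitableTotalColoring_sym2Sum [NeZero t] (ht : Odd t)
    (hc : ∀ u, Set.InjOn c (insert u (G.neighborSet u)))
    (hshift : ∀ δ : Fin t, ∃ f : G ≃g G, ∀ x, c (f x) = c x + δ) :
    IsEquitableTotalColoring G (fun x => c x + c x) (sym2Sum c) := by
  refine ⟨isTotalColoring_sym2Sum ht hc, fun γ γ' => le_add_right (le_of_eq ?_)⟩
  obtain ⟨δ, hδ : δ + δ = γ' - γ⟩ := (Fin.bijective_add_self ht).2 (γ' - γ)
  obtain ⟨f, hf⟩ := hshift δ
  have hclass := totalClassSize_add_of_iso (cv := fun x => c x + c x) (ce := sym2Sum c) f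
    (δ := δ + δ) (fun x => by simp only [hf]; abel)
    (fun e => by induction e using Sym2.ind; simp only [Sym2.map_mk, sym2Sum_mk, hf]; abel) γ
  rw [hδ, add_sub_cancel] at hclass
  exact hclass.symm

end SumColoring

end TotalColoring

namespace ZMod

variable {n m : ℕ} [NeZero m]

noncomputable def castFin (h : m ∣ n) : ZMod n →+ Fin m :=
  (finEquiv m).symm.toAddEquiv.toAddMonoidHom.comp (castHom h (ZMod m)).toAddMonoidHom

theorem castFin_surjective (h : m ∣ n) : Function.Surjective (castFin h) :=
  (finEquiv m).symm.surjective.comp (castHom_surjective h)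

theorem injOn_castFin_comp_intCast (h : m ∣ n) {k : ℕ} (hkm : 2 * k < m) :
    Set.InjOn (castFin h ∘ Int.cast) (Set.Icc (-k) k) := fun _ ha _ hb hab =>
  Int.cast_injOn_Icc (R := ZMod m) hkm ha hb
    ((finEquiv m).symm.injective (by simpa [castFin] using hab))

end ZMod

namespace powerOfCycle

variable {n k : ℕ}

theorem mem_closedNbhd_iff {u v : ZMod n} :
    v ∈ insert u ((powerOfCycle n k).neighborSet u) ↔
      ∃ a ∈ Set.Icc (-(k : ℤ)) k, v = u + a := by
  constructor
  · rintro (rfl | ⟨-, ⟨j, hj₁, hjk, huv⟩ | ⟨j, hj₁, hjk, hvu⟩⟩)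
    · exact ⟨0, by simp, by simp⟩
    · exact ⟨-j, ⟨by simpa using hjk, by omega⟩, by push_cast; rw [← huv]; ring⟩
    · exact ⟨j, ⟨by omega, by simpa using hjk⟩, by push_cast; rw [← hvu]; ring⟩
  · rintro ⟨a, ⟨hak₁, hak₂⟩, rfl⟩
    by_cases ha : (a : ZMod n) = 0
    · simp [ha]
    refine Set.mem_insert_of_mem _ ⟨by simpa using ha, ?_⟩
    obtain ⟨j, rfl | rfl⟩ := Int.eq_nat_or_neg a
    · have hj : j ≠ 0 := by rintro rfl; simp at ha
      exact Or.inr ⟨j, by omega, by omega, by simp⟩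
    · have hj : j ≠ 0 := by rintro rfl; simp at ha
      exact Or.inl ⟨j, by omega, by omega, by simp⟩

def addRight (n k : ℕ) (d : ZMod n) : powerOfCycle n k ≃g powerOfCycle n k where
  toEquiv := Equiv.addRight d
  map_rel_iff' := by simp [powerOfCycle]

theorem injOn_castFin_closedNbhd (hdvd : 2 * k + 1 ∣ n) (u : ZMod n) :
    Set.InjOn (ZMod.castFin hdvd) (insert u ((powerOfCycle n k).neighborSet u)) := by
  intro v hv w hw hvw
  obtain ⟨a, ha, rfl⟩ := mem_closedNbhd_iff.1 hv
  obtain ⟨b, hb, rfl⟩ := mem_closedNbhd_iff.1 hw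
  rw [map_add, map_add, add_right_inj] at hvw
  rw [ZMod.injOn_castFin_comp_intCast hdvd (Nat.lt_succ_self _) ha hb hvw]

theorem isEquitableTotalColoring_castFin (hdvd : 2 * k + 1 ∣ n) :
    IsEquitableTotalColoring (powerOfCycle n k)
      (fun x => ZMod.castFin hdvd x + ZMod.castFin hdvd x) (sym2Sum (ZMod.castFin hdvd)) :=
  isEquitableTotalColoring_sym2Sum (odd_two_mul_add_one k) (injOn_castFin_closedNbhd hdvd)
    fun δ =>
      let ⟨d, hd⟩ := ZMod.castFin_surjective hdvd δ
      ⟨addRight n k d, fun x => by simp [addRight, hd]⟩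

theorem two_mul_add_one_le_of_isTotalColoring (hdvd : 2 * k + 1 ∣ n) {t : ℕ}
    {cv : ZMod n → Fin t} {ce : Sym2 (ZMod n) → Fin t}
    (h : IsTotalColoring (powerOfCycle n k) cv ce) : 2 * k + 1 ≤ t := by
  have hinj : Set.InjOn (Int.cast : ℤ → ZMod n) (Set.Icc (-k) k) :=
    (ZMod.injOn_castFin_comp_intCast hdvd (Nat.lt_succ_self _)).of_comp
  calc 2 * k + 1 = ((Finset.Icc (-(k : ℤ)) k).image (Int.cast : ℤ → ZMod n)).card := by
        rw [Finset.card_image_of_injOn (by simpa using hinj), Int.card_Icc]; omega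
    _ ≤ t := h.card_le_of_subset_closedNbhd (u := 0) fun v hv => by
        obtain ⟨a, ha, rfl⟩ := by simpa using hv
        exact mem_closedNbhd_iff.2 ⟨a, by simpa using ha, by simp⟩

end powerOfCycle

theorem powerOfCycle_equitable_general (n k : ℕ)
    (hdvd : (2 * k + 1) ∣ n) :
    equitableTotalChromaticNumber (powerOfCycle n k) = totalChromaticNumber (powerOfCycle n k) ∧
    totalChromaticNumber (powerOfCycle n k) = 2 * k + 1 := by
  have hequitable := powerOfCycle.isEquitableTotalColoring_castFin hdvd
  have hle : ∀ {t} (cv : ZMod n → Fin t) ce, IsTotalColoring (powerOfCycle n k) cv ce →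
      2 * k + 1 ≤ t := fun _ _ => powerOfCycle.two_mul_add_one_le_of_isTotalColoring hdvd
  have htotal := totalChromaticNumber_eq_of_le hequitable.1 hle
  exact ⟨(equitableTotalChromaticNumber_eq_of_le hequitable hle).trans htotal.symm, htotal⟩

/-- Theorem 2.2 (equitable part): if `n` is even, `1 ≤ k < n/2` and `(2k+1) ∣ n`, then the
equitable total chromatic number of `C_n^k` equals its total chromatic number, both `2k+1`. -/
theorem powerOfCycle_equitable (n k : ℕ) (hn : Even n) (hk : 1 ≤ k) (hkn : 2 * k < n)
    (hdvd : (2 * k + 1) ∣ n) :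
    equitableTotalChromaticNumber (powerOfCycle n k) = totalChromaticNumber (powerOfCycle n k) ∧
    totalChromaticNumber (powerOfCycle n k) = 2 * k + 1 :=
  powerOfCycle_equitable_general n k hdvd
end

section
/- Let n be an even positive integer and k a positive integer with 1 ≤ k < n/2 such that (2k+1) divides n. Then the neighborhood sum distinguishing total chromatic number of the power of cycle C_n^k satisfies χ''_Σ(C_n^k) ≤ 2k + 3 = Δ(C_n^k) + 3. -/
open SimpleGraph

/-!
Put `m = 2k+1`. Since `m ∣ n`, colouring each vertex `u` by `2u mod m` and each edge `{x, y}`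
by `x + y mod m` is a total colouring with `m` colours: around `u` the colours are the
`2u + j` for `|j| ≤ k`, which are all the residues mod `m`. Since `n` is even, we can recolour
each edge `{x, x+1}` with `2k+1` or `2k+2` according to the parity of `x` and still have a
total colouring. After this the colour sum at `u` is `C - ((2u+1) mod m + (2u-1) mod m)` for a
constant `C`. Adjacent vertices have distinct `2u mod m`, and for odd `m` the map
`a ↦ a mod m + (a+2) mod m` is injective, so adjacent vertices get distinct sums.
-/

namespace SimpleGraph

variable {V : Type*} (G : SimpleGraph V) {t : ℕ} {cv : V → Fin t} {ce : Sym2 V → Fin t}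

theorem isTotalColoring_of_adj (hv : ∀ u v, G.Adj u v → cv u ≠ cv v)
    (he : ∀ u v w, G.Adj u v → G.Adj u w → v ≠ w → ce s(u, v) ≠ ce s(u, w))
    (hve : ∀ u v, G.Adj u v → ce s(u, v) ≠ cv u) : IsTotalColoring G cv ce := by
  refine ⟨hv, ?_, ?_⟩
  · rintro e₁ he₁ e₂ he₂ hne ⟨u, hu₁, hu₂⟩
    obtain ⟨v, rfl⟩ := Sym2.mem_iff_exists.mp hu₁
    obtain ⟨w, rfl⟩ := Sym2.mem_iff_exists.mp hu₂
    exact he u v w he₁ he₂ (by rintro rfl; exact hne rfl)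
  · rintro e he u hu
    obtain ⟨v, rfl⟩ := Sym2.mem_iff_exists.mp hu
    exact hve u v he

theorem incidenceSet_eq_image (u : V) : G.incidenceSet u = (s(u, ·)) '' G.neighborSet u := by
  ext e
  constructor
  · rintro ⟨he, hu⟩
    obtain ⟨v, rfl⟩ := Sym2.mem_iff_exists.mp hu
    exact ⟨v, he, rfl⟩
  · rintro ⟨v, hv, rfl⟩
    exact (G.mem_incidenceSet u v).mpr hv

theorem nsdSum_eq_sum_of_neighborSet_eq_image {ι : Type*} {s : Finset ι} {f : ι → V} {u : V}
    (hf : Set.InjOn f s) (hs : G.neighborSet u = f '' s) :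
    nsdSum G cv ce u = (cv u : ℕ) + 1 + ∑ i ∈ s, ((ce s(u, f i) : ℕ) + 1) := by
  have hinj : Set.InjOn (s(u, ·)) (G.neighborSet u) := fun v _ w _ h => Sym2.congr_right.mp h
  rw [nsdSum, incidenceSet_eq_image, finsum_mem_image hinj, hs, finsum_mem_image hf,
    finsum_mem_coe_finset]

theorem nsdTotalChromaticNumber_le (h : IsNSDTotalColoring G cv ce) :
    nsdTotalChromaticNumber G ≤ t :=
  Nat.sInf_le ⟨cv, ce, h⟩

end SimpleGraph

namespace ZMod

theorem intCast_injOn_Icc {n : ℕ} {a b : ℤ} (h : b - a < n) :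
    Set.InjOn (Int.cast : ℤ → ZMod n) (Set.Icc a b) := by
  intro i hi j hj hij
  rw [intCast_eq_intCast_iff_dvd_sub] at hij
  have := Int.eq_zero_of_abs_lt_dvd hij (abs_sub_lt_iff.mpr ⟨by grind, by grind⟩)
  omega

theorem sum_val (m : ℕ) [NeZero m] : ∑ a : ZMod m, a.val = m * (m - 1) / 2 := by
  rw [← Finset.sum_range_id]
  refine Finset.sum_nbij val (fun a _ => Finset.mem_range.mpr (val_lt a))
    (val_injective m).injOn (fun i hi => ?_) (fun _ _ => rfl)
  exact ⟨i, Finset.mem_coe.mpr (Finset.mem_univ _), val_cast_of_lt (Finset.mem_range.mp hi)⟩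

theorem val_add_eq_or {m : ℕ} [NeZero m] (a b : ZMod m) :
    (a + b).val = a.val + b.val ∨ (a + b).val + m = a.val + b.val := by
  rcases lt_or_ge (a.val + b.val) m with h | h
  · exact Or.inl (val_add_of_lt h)
  · exact Or.inr (val_add_val_of_le h).symm

/-- For odd `m`, a wrap-around in `a + b` changes the parity of `a.val + (a + b).val`. -/
theorem val_add_val_add_injective {m : ℕ} (hm : Odd m) (b : ZMod m) :
    Function.Injective fun a : ZMod m => a.val + (a + b).val := by
  have : NeZero m := ⟨by rintro rfl; exact Nat.not_odd_zero hm⟩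
  intro a a' h
  obtain ⟨r, rfl⟩ := hm
  apply val_injective
  rcases val_add_eq_or a b with ha | ha <;> rcases val_add_eq_or a' b with ha' | ha' <;>
    simp only at h <;> omega

theorem val_add_val_add_one (p : ZMod 2) : p.val + (p + 1).val = 1 := by
  fin_cases p <;> rfl

end ZMod

namespace PowerOfCycle

open Finset SimpleGraph

noncomputable def steps (k : ℕ) : Finset ℤ := (Icc (-k : ℤ) k).erase 0

/-- The colour, shifted down by one, of the edge from a vertex of colour `c` and parity `p` to
its neighbour `j` steps further along the cycle. -/
def starColor (k : ℕ) (c : ZMod (2 * k + 1)) (p : ZMod 2) (j : ℤ) : ℕ :=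
  if j = 1 then 2 * k + 1 + p.val else if j = -1 then 2 * k + 1 + (p + 1).val else (c + j).val

section steps

variable {n k : ℕ} {j : ℤ}

theorem mem_steps : j ∈ steps k ↔ j ≠ 0 ∧ -k ≤ j ∧ j ≤ k := by
  rw [steps, mem_erase, mem_Icc]

theorem mem_Icc_of_mem_steps (hj : j ∈ steps k) : j ∈ Icc (-k : ℤ) k :=
  (mem_erase.mp hj).2

theorem card_steps : #(steps k) = 2 * k := by
  rw [steps, card_erase_of_mem (mem_Icc.mpr ⟨by omega, by omega⟩), Int.card_Icc]
  omega

theorem intCast_injOn (hkn : 2 * k < n) :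
    Set.InjOn (Int.cast : ℤ → ZMod n) (Icc (-k : ℤ) k) := by
  rw [coe_Icc]
  exact ZMod.intCast_injOn_Icc (by omega)

theorem sum_intCast_Icc {M : Type*} [AddCommMonoid M] (f : ZMod (2 * k + 1) → M) :
    ∑ j ∈ Icc (-k : ℤ) k, f j = ∑ a, f a := by
  have hinj := intCast_injOn (n := 2 * k + 1) (k := k) (by omega)
  have himage : (Icc (-k : ℤ) k).image (Int.cast : ℤ → ZMod (2 * k + 1)) = univ := by
    refine eq_univ_of_card _ ?_
    rw [card_image_of_injOn hinj, Int.card_Icc, ZMod.card]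
    omega
  rw [← himage, sum_image hinj]

theorem intCast_ne_zero (hkn : 2 * k < n) (hj : j ∈ steps k) : (j : ZMod n) ≠ 0 := by
  rw [← Int.cast_zero, Ne, (intCast_injOn hkn).eq_iff (mem_Icc_of_mem_steps hj)
    (mem_Icc.mpr ⟨by omega, by omega⟩)]
  exact (mem_steps.mp hj).1

end steps

section starColor

variable {k : ℕ} (c : ZMod (2 * k + 1)) (p : ZMod 2)

theorem starColor_injOn : Set.InjOn (starColor k c p) (steps k) := by
  intro i hi j hj h
  have hi' := mem_steps.mp hi
  have hj' := mem_steps.mp hj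
  have hp := ZMod.val_add_val_add_one p
  have hci := ZMod.val_lt (c + (i : ZMod (2 * k + 1)))
  have hcj := ZMod.val_lt (c + (j : ZMod (2 * k + 1)))
  unfold starColor at h
  split_ifs at h <;> try omega
  exact intCast_injOn (by omega) (mem_Icc_of_mem_steps hi) (mem_Icc_of_mem_steps hj)
    (add_left_cancel (ZMod.val_injective _ h))

theorem starColor_ne_val {j : ℤ} (hj : j ∈ steps k) : starColor k c p j ≠ c.val := by
  have hj' := mem_steps.mp hj
  have hc := ZMod.val_lt c
  unfold starColor
  split_ifs <;> try omega
  intro h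
  exact intCast_ne_zero (n := 2 * k + 1) (by omega) hj (by simpa using ZMod.val_injective _ h)

theorem sum_val_add_intCast_Icc : ∑ j ∈ Icc (-k : ℤ) k, (c + j).val = k * (2 * k + 1) := by
  rw [sum_intCast_Icc (k := k) (fun a => (c + a).val),
    Fintype.sum_equiv (Equiv.addLeft c) (fun a => (c + a).val) ZMod.val (fun _ => rfl),
    ZMod.sum_val]
  exact Nat.div_eq_of_eq_mul_left two_pos (by rw [Nat.add_sub_cancel]; ring)

/-- Only the two edges of step `±1` deviate from the colours `c + j`, which run over all
residues mod `2k+1`. -/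
theorem sum_starColor (hk : 1 ≤ k) :
    ∑ j ∈ steps k, starColor k c p j + ((c + 1).val + (c - 1).val) + c.val =
      k * (2 * k + 1) + (4 * k + 3) := by
  have h1 : (1 : ℤ) ∈ steps k := mem_steps.mpr ⟨one_ne_zero, by omega, by omega⟩
  have h2 : (-1 : ℤ) ∈ (steps k).erase 1 :=
    mem_erase.mpr ⟨by norm_num, mem_steps.mpr ⟨by norm_num, by omega, by omega⟩⟩
  have hrest : ∑ j ∈ ((steps k).erase 1).erase (-1), starColor k c p j =
      ∑ j ∈ ((steps k).erase 1).erase (-1), (c + j).val := by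
    refine sum_congr rfl fun j hj => ?_
    obtain ⟨hj₁, hj₂, -⟩ := mem_erase.mp hj |>.imp_right mem_erase.mp
    rw [starColor, if_neg hj₂, if_neg hj₁]
  have hall := sum_val_add_intCast_Icc c
  rw [← add_sum_erase _ _ (mem_Icc.mpr ⟨by omega, by omega⟩ : (0 : ℤ) ∈ Icc (-k : ℤ) k),
    show (Icc (-k : ℤ) k).erase 0 = steps k from rfl] at hall
  rw [← add_sum_erase _ _ h1, ← add_sum_erase _ _ h2] at hall ⊢
  rw [hrest]
  have hp := ZMod.val_add_val_add_one p
  norm_num [starColor, ← sub_eq_add_neg] at hall ⊢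
  omega

end starColor

section graph

variable {n k : ℕ}

theorem adj_iff (hkn : 2 * k < n) {u v : ZMod n} :
    (powerOfCycle n k).Adj u v ↔ ∃ j ∈ steps k, v = u + j := by
  rw [powerOfCycle, fromRel_adj]
  constructor
  · rintro ⟨-, ⟨j, hj₁, hjk, h⟩ | ⟨j, hj₁, hjk, h⟩⟩
    · exact ⟨-j, mem_steps.mpr ⟨by omega, by omega, by omega⟩, by
        push_cast; linear_combination -h⟩
    · exact ⟨j, mem_steps.mpr ⟨by omega, by omega, by omega⟩, by
        push_cast; linear_combination h⟩
  · rintro ⟨j, hj, rfl⟩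
    have hj' := mem_steps.mp hj
    refine ⟨fun h => intCast_ne_zero hkn hj (by linear_combination -h), ?_⟩
    obtain ⟨m, rfl | rfl⟩ := Int.eq_nat_or_neg j
    · exact Or.inr ⟨m, by omega, by omega, by push_cast; ring⟩
    · exact Or.inl ⟨m, by omega, by omega, by push_cast; ring⟩

theorem neighborSet_eq_image (hkn : 2 * k < n) (u : ZMod n) :
    (powerOfCycle n k).neighborSet u = (fun j : ℤ => u + j) '' steps k := by
  ext v
  rw [mem_neighborSet, adj_iff hkn]
  exact ⟨fun ⟨j, hj, h⟩ => ⟨j, hj, h.symm⟩, fun ⟨j, hj, h⟩ => ⟨j, hj, h.symm⟩⟩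

theorem add_intCast_injOn (hkn : 2 * k < n) (u : ZMod n) :
    Set.InjOn (fun j : ℤ => u + j) (steps k) :=
  fun _ hi _ hj h => intCast_injOn hkn (mem_Icc_of_mem_steps hi) (mem_Icc_of_mem_steps hj)
    (add_left_cancel h)

variable (n k)

def vertexResidue (u : ZMod n) : ZMod (2 * k + 1) := 2 * u.cast

def vertexColor (u : ZMod n) : Fin (2 * k + 3) :=
  ⟨(vertexResidue n k u).val, by have := ZMod.val_lt (vertexResidue n k u); omega⟩

def edgeColorFun (x y : ZMod n) : ℕ :=
  if y - x = 1 then 2 * k + 1 + (x.cast : ZMod 2).val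
  else if x - y = 1 then 2 * k + 1 + (y.cast : ZMod 2).val
  else ((x.cast : ZMod (2 * k + 1)) + y.cast).val

theorem edgeColorFun_lt (x y : ZMod n) : edgeColorFun n k x y < 2 * k + 3 := by
  have hx := ZMod.val_lt (x.cast : ZMod 2)
  have hy := ZMod.val_lt (y.cast : ZMod 2)
  have hxy := ZMod.val_lt ((x.cast : ZMod (2 * k + 1)) + y.cast)
  unfold edgeColorFun
  split_ifs <;> omega

theorem edgeColorFun_comm (h2 : (2 : ZMod n) ≠ 0) (x y : ZMod n) :
    edgeColorFun n k x y = edgeColorFun n k y x := by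
  unfold edgeColorFun
  by_cases h₁ : y - x = 1 <;> by_cases h₂ : x - y = 1
  · exact absurd (by linear_combination -h₁ - h₂) h2
  all_goals simp [h₁, h₂, add_comm]

def edgeColor (h2 : (2 : ZMod n) ≠ 0) : Sym2 (ZMod n) → Fin (2 * k + 3) :=
  Sym2.lift ⟨fun x y => ⟨edgeColorFun n k x y, edgeColorFun_lt n k x y⟩,
    fun x y => Fin.ext (edgeColorFun_comm n k h2 x y)⟩

variable {n k}

theorem vertexResidue_add (hdvd : 2 * k + 1 ∣ n) (u : ZMod n) (j : ℤ) :
    vertexResidue n k (u + j) = vertexResidue n k u + 2 * j := by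
  rw [vertexResidue, vertexResidue, ZMod.cast_add hdvd, ZMod.cast_intCast hdvd, mul_add]

theorem vertexResidue_ne_of_adj (hdvd : 2 * k + 1 ∣ n) (hkn : 2 * k < n) {u v : ZMod n}
    (huv : (powerOfCycle n k).Adj u v) : vertexResidue n k u ≠ vertexResidue n k v := by
  obtain ⟨j, hj, rfl⟩ := (adj_iff hkn).mp huv
  rw [vertexResidue_add hdvd, ne_eq, left_eq_add]
  intro h
  have hm : ((2 * k + 1 : ℕ) : ZMod (2 * k + 1)) = 0 := ZMod.natCast_self _
  push_cast at hm
  -- `k + 1` is the inverse of `2` modulo `2k+1`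
  exact intCast_ne_zero (n := 2 * k + 1) (by omega) hj
    (by linear_combination (k + 1 : ZMod (2 * k + 1)) * h - (j : ZMod (2 * k + 1)) * hm)

theorem edgeColor_mk_add (hn : Even n) (hdvd : 2 * k + 1 ∣ n) (hkn : 2 * k < n)
    (h2 : (2 : ZMod n) ≠ 0) (u : ZMod n) {j : ℤ} (hj : j ∈ steps k) :
    (edgeColor n k h2 s(u, u + j) : ℕ) = starColor k (vertexResidue n k u) u.cast j := by
  have hj' := mem_steps.mp hj
  have hinj : ∀ i ∈ Icc (-k : ℤ) k, ((j : ZMod n) = i ↔ j = i) :=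
    fun i hi => (intCast_injOn hkn).eq_iff (mem_Icc_of_mem_steps hj) hi
  have hplus : u + j - u = 1 ↔ j = 1 := by
    rw [add_sub_cancel_left, ← Int.cast_one, hinj _ (mem_Icc.mpr ⟨by omega, by omega⟩)]
  have hminus : u - (u + j) = 1 ↔ j = -1 := by
    rw [← hinj _ (mem_Icc.mpr ⟨by omega, by omega⟩), Int.cast_neg, Int.cast_one]
    constructor <;> intro h <;> linear_combination -h
  change edgeColorFun n k u (u + j) = _
  simp only [edgeColorFun, starColor, hplus, hminus]
  split_ifs with h₁ h₂
  · rfl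
  · rw [h₂, ZMod.cast_add hn.two_dvd, ZMod.cast_intCast hn.two_dvd]
    push_cast
    rw [ZMod.neg_eq_self_mod_two]
  · rw [vertexResidue, ZMod.cast_add hdvd, ZMod.cast_intCast hdvd]
    ring_nf

theorem nsdSum_add_val_add_val (hk : 1 ≤ k) (hn : Even n) (hdvd : 2 * k + 1 ∣ n)
    (hkn : 2 * k < n) (h2 : (2 : ZMod n) ≠ 0) (u : ZMod n) :
    nsdSum (powerOfCycle n k) (vertexColor n k) (edgeColor n k h2) u +
      ((vertexResidue n k u + 1).val + (vertexResidue n k u - 1).val) =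
        k * (2 * k + 1) + (6 * k + 4) := by
  rw [nsdSum_eq_sum_of_neighborSet_eq_image _ (add_intCast_injOn hkn u)
    (neighborSet_eq_image hkn u), sum_add_distrib, sum_const, card_steps, smul_eq_mul, mul_one,
    sum_congr rfl fun j hj => edgeColor_mk_add hn hdvd hkn h2 u hj]
  have := sum_starColor (vertexResidue n k u) u.cast hk
  change (vertexResidue n k u).val + 1 + _ + _ = _ at *
  omega

theorem isNSDTotalColoring_vertexColor_edgeColor (hk : 1 ≤ k) (hn : Even n)
    (hdvd : 2 * k + 1 ∣ n) (hkn : 2 * k < n) (h2 : (2 : ZMod n) ≠ 0) :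
    IsNSDTotalColoring (powerOfCycle n k) (vertexColor n k) (edgeColor n k h2) := by
  refine ⟨isTotalColoring_of_adj _ ?vertex ?edge ?incident, ?sum⟩
  case vertex =>
    intro u v huv h
    have h' := congrArg Fin.val h
    exact vertexResidue_ne_of_adj hdvd hkn huv (ZMod.val_injective _ h')
  case edge =>
    intro u v w huv huw hvw h
    obtain ⟨i, hi, rfl⟩ := (adj_iff hkn).mp huv
    obtain ⟨j, hj, rfl⟩ := (adj_iff hkn).mp huw
    have h' := congrArg Fin.val h
    rw [edgeColor_mk_add hn hdvd hkn h2 u hi, edgeColor_mk_add hn hdvd hkn h2 u hj] at h'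
    exact hvw (by rw [starColor_injOn _ _ hi hj h'])
  case incident =>
    intro u v huv h
    obtain ⟨j, hj, rfl⟩ := (adj_iff hkn).mp huv
    have h' := congrArg Fin.val h
    rw [edgeColor_mk_add hn hdvd hkn h2 u hj] at h'
    exact starColor_ne_val _ _ hj h'
  case sum =>
    intro u v huv h
    have hu := nsdSum_add_val_add_val hk hn hdvd hkn h2 u
    have hv := nsdSum_add_val_add_val hk hn hdvd hkn h2 v
    have hshift (x : ZMod (2 * k + 1)) :
        (x - 1).val + (x - 1 + 2).val = (x + 1).val + (x - 1).val := by
      rw [show x - 1 + 2 = x + 1 by ring, add_comm]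
    refine vertexResidue_ne_of_adj hdvd hkn huv (sub_left_injective (b := 1) ?_)
    refine ZMod.val_add_val_add_injective ⟨k, rfl⟩ 2 ?_
    dsimp only
    rw [hshift, hshift]
    omega

end graph

end PowerOfCycle

/-- Theorem 2.2 (NSD part): if `n` is even, `1 ≤ k < n/2` and `(2k+1) ∣ n`, then
`χ''_Σ(C_n^k) ≤ 2k + 3 = Δ + 3`. -/
theorem powerOfCycle_nsd (n k : ℕ) (hn : Even n) (hk : 1 ≤ k) (hkn : 2 * k < n)
    (hdvd : (2 * k + 1) ∣ n) :
    nsdTotalChromaticNumber (powerOfCycle n k) ≤ 2 * k + 3 := by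
  have h2 : (2 : ZMod n) ≠ 0 := by
    rw [← Nat.cast_ofNat, Ne, ZMod.natCast_eq_zero_iff]
    exact fun h => absurd (Nat.le_of_dvd two_pos h) (by omega)
  exact nsdTotalChromaticNumber_le _
    (PowerOfCycle.isNSDTotalColoring_vertexColor_edgeColor hk hn hdvd hkn h2)
end

section
/- Let n be an even positive integer and let G = Cay(Z_n, S) be a circulant graph whose symmetric connection set S ⊆ Z_n \ {0} satisfies |S| = n/2 − 2, n/2 ∉ S, and s + s' ≠ n/2 (mod n) for all s, s' ∈ S. Then the total chromatic number of G satisfies χ''(G) ≤ n/2 + 1 = Δ(G) + 3. -/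
open SimpleGraph

/-! Reduction modulo `m = n / 2` maps `Cay(ℤ_n, S)` to the complete graph on `ℤ_m`, injectively
on every closed neighbourhood: `m ∉ S` separates adjacent vertices, and `s + s' ≠ m` separates two
neighbours of a vertex. Such a map pulls back total colorings. The complete graph on `ℤ_m ⊆ ℤ_{m+1}`
is totally colored by `x ↦ 2x`, `xy ↦ x + y` in `ℤ_{m+1}` as soon as `m + 1` is odd, and `m` is
even because `s ↦ -s` pairs off the `m - 2` elements of `S`. -/

theorem ZMod.add_self_injective {k : ℕ} (hk : Odd k) :
    Function.Injective fun a : ZMod k => a + a := by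
  intro a b h
  rw [← sub_eq_zero, ← ZMod.add_self_eq_zero_iff_eq_zero hk]
  simp only at h
  rw [sub_add_sub_comm, h, sub_self]

theorem Finset.even_card_of_involution {α : Type*} {s : Finset α} (g : α → α)
    (hg : Function.Involutive g) (hmem : ∀ a ∈ s, g a ∈ s) (hfix : ∀ a ∈ s, g a ≠ a) :
    Even s.card := by
  classical
  rw [← ZMod.natCast_eq_zero_iff_even, Finset.card_eq_sum_ones, Nat.cast_sum, Nat.cast_one]
  exact Finset.sum_involution (fun a _ => g a) (fun _ _ => by decide)
    (fun a ha _ => hfix a ha) hmem (fun a _ => hg a)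

theorem ZMod.cast_eq_zero_iff_of_add_self {m : ℕ} [NeZero m] (z : ZMod (m + m)) :
    (ZMod.cast z : ZMod m) = 0 ↔ z = 0 ∨ z = m := by
  have : NeZero (m + m) := ⟨by have := NeZero.ne m; omega⟩
  have hz := z.val_lt
  have hzm : z = z.val := (ZMod.natCast_zmod_val z).symm
  rw [ZMod.cast_eq_val, ZMod.natCast_eq_zero_iff]
  constructor
  · rintro ⟨k, hk⟩
    obtain rfl | rfl : k = 0 ∨ k = 1 := by
      have hk2 : k < 2 := Nat.lt_of_mul_lt_mul_left (a := m) (by rw [← hk]; omega)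
      omega
    · left; rw [hzm, hk]; simp
    · right; rw [hzm, hk, mul_one]
  · rintro (rfl | rfl)
    · simp
    · rw [ZMod.val_natCast_of_lt (by omega)]

theorem ZMod.natCast_val_injective {m k : ℕ} [NeZero m] (hmk : m ≤ k) :
    Function.Injective fun y : ZMod m => (y.val : ZMod k) := by
  intro y y' h
  have hval := congrArg ZMod.val h
  simp only at hval
  rw [ZMod.val_cast_of_lt (by have := y.val_lt; omega),
    ZMod.val_cast_of_lt (by have := y'.val_lt; omega)] at hval
  exact ZMod.val_injective m hval

theorem ZMod.even_card_of_neg_mem {m : ℕ} [NeZero m] {S : Finset (ZMod (m + m))}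
    (hsym : ∀ s ∈ S, -s ∈ S) (h0 : (0 : ZMod (m + m)) ∉ S) (hhalf : (m : ZMod (m + m)) ∉ S) :
    Even S.card := by
  have : NeZero (m + m) := ⟨by have := NeZero.ne m; omega⟩
  refine S.even_card_of_involution _ neg_involutive hsym fun s hs hneg => ?_
  rcases (ZMod.neg_eq_self_iff s).mp hneg with rfl | hval
  · exact h0 hs
  · rw [← ZMod.natCast_zmod_val s, show s.val = m by omega] at hs
    exact hhalf hs

section TotalColoring

variable {V W : Type*} {G : SimpleGraph V} {H : SimpleGraph W} {t : ℕ}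

theorem totalChromaticNumber_le {cv : V → Fin t} {ce : Sym2 V → Fin t}
    (h : IsTotalColoring G cv ce) : totalChromaticNumber G ≤ t :=
  Nat.sInf_le ⟨cv, ce, h⟩

theorem isTotalColoring_bot (cv : V → Fin t) (ce : Sym2 V → Fin t) :
    IsTotalColoring (⊥ : SimpleGraph V) cv ce := by
  simp [IsTotalColoring]

theorem IsTotalColoring.comap {cv : W → Fin t} {ce : Sym2 W → Fin t}
    (h : IsTotalColoring H cv ce) (φ : G →g H)
    (hφ : ∀ ⦃u a b⦄, G.Adj u a → G.Adj u b → a ≠ b → φ a ≠ φ b) :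
    IsTotalColoring G (cv ∘ φ) (ce ∘ Sym2.map φ) := by
  obtain ⟨hvv, hee, hev⟩ := h
  refine ⟨fun u v huv => hvv _ _ (φ.map_adj huv), ?_, ?_⟩
  · rintro e₁ he₁ e₂ he₂ hne ⟨u, hu₁, hu₂⟩
    obtain ⟨a, rfl⟩ := Sym2.mem_iff_exists.mp hu₁
    obtain ⟨b, rfl⟩ := Sym2.mem_iff_exists.mp hu₂
    have hab : φ a ≠ φ b := hφ he₁ he₂ fun h => hne (h ▸ rfl)
    exact hee _ (φ.map_adj he₁) _ (φ.map_adj he₂) (fun h => hab (Sym2.congr_right.mp h))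
      ⟨φ u, Sym2.mem_mk_left _ _, Sym2.mem_mk_left _ _⟩
  · rintro e he u hu
    obtain ⟨a, rfl⟩ := Sym2.mem_iff_exists.mp hu
    exact hev _ (φ.map_adj he) _ (Sym2.mem_mk_left _ _)

end TotalColoring

theorem isTotalColoring_top_add {A : Type*} [AddCancelCommMonoid A] {t : ℕ} (e : A ≃ Fin t)
    (hdouble : Function.Injective fun a : A => a + a) :
    IsTotalColoring (⊤ : SimpleGraph A) (fun a => e (a + a))
      (fun z => e (Sym2.lift ⟨(· + ·), add_comm⟩ z)) := by
  refine ⟨fun u v huv h => huv (hdouble (e.injective h)), ?_, ?_⟩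
  · rintro e₁ - e₂ - hne ⟨u, hu₁, hu₂⟩ h
    obtain ⟨a, rfl⟩ := Sym2.mem_iff_exists.mp hu₁
    obtain ⟨b, rfl⟩ := Sym2.mem_iff_exists.mp hu₂
    have hab : u + a = u + b := e.injective h
    rw [add_left_cancel hab] at hne
    exact hne rfl
  · rintro f hf u hu h
    obtain ⟨a, rfl⟩ := Sym2.mem_iff_exists.mp hu
    have hau : u + a = u + u := e.injective h
    exact (top_adj _ _ |>.mp hf) (add_left_cancel hau).symm

section Circulant

variable {n : ℕ} {S : Finset (ZMod n)}

theorem cayley_adj_iff (hsym : ∀ s ∈ S, -s ∈ S) (h0 : (0 : ZMod n) ∉ S) {x y : ZMod n} :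
    (cayley n S).Adj x y ↔ x - y ∈ S := by
  rw [cayley, fromRel_adj]
  constructor
  · rintro ⟨-, h | h⟩
    · exact h
    · simpa using hsym _ h
  · intro h
    exact ⟨fun hxy => h0 (by rwa [hxy, sub_self] at h), .inl h⟩

variable {B : Type*} [AddGroup B] (ψ : ZMod n →+ B)

theorem cayley_map_ne_of_adj (hsym : ∀ s ∈ S, -s ∈ S) (h0 : (0 : ZMod n) ∉ S)
    (hS : ∀ s ∈ S, ψ s ≠ 0) {x y : ZMod n}
    (h : (cayley n S).Adj x y) : ψ x ≠ ψ y := by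
  rw [← sub_ne_zero, ← map_sub]
  exact hS _ ((cayley_adj_iff hsym h0).mp h)

theorem cayley_map_ne_of_adj_of_adj (hsym : ∀ s ∈ S, -s ∈ S) (h0 : (0 : ZMod n) ∉ S)
    (hSS : ∀ s ∈ S, ∀ s' ∈ S, s + s' ≠ 0 → ψ (s + s') ≠ 0)
    {u a b : ZMod n} (ha : (cayley n S).Adj u a) (hb : (cayley n S).Adj u b) (hab : a ≠ b) :
    ψ a ≠ ψ b := by
  rw [← sub_ne_zero, ← map_sub, ← sub_add_sub_cancel a u b]
  refine hSS _ ((cayley_adj_iff hsym h0).mp ha.symm) _ ((cayley_adj_iff hsym h0).mp hb) ?_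
  rwa [sub_add_sub_cancel, sub_ne_zero]

end Circulant

theorem circulant_half_minus_two_general (n : ℕ) (heven : Even n)
    (S : Finset (ZMod n)) (hsym : ∀ s ∈ S, -s ∈ S) (h0 : (0 : ZMod n) ∉ S)
    (hcard : S.card = n / 2 - 2) (hinv : ((n / 2 : ℕ) : ZMod n) ∉ S)
    (hsum : ∀ s ∈ S, ∀ s' ∈ S, s + s' ≠ ((n / 2 : ℕ) : ZMod n)) :
    totalChromaticNumber (cayley n S) ≤ n / 2 + 1 := by
  rcases S.eq_empty_or_nonempty with rfl | hS
  · have hbot : cayley n ∅ = ⊥ := by ext; simp [cayley]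
    rw [hbot]
    exact totalChromaticNumber_le (isTotalColoring_bot (fun _ => 0) (fun _ => 0))
  obtain ⟨m, rfl⟩ := heven
  rw [show (m + m) / 2 = m by omega] at hcard hinv hsum ⊢
  have : NeZero m := ⟨by have := hS.card_pos; omega⟩
  have hodd : Odd (m + 1) := by
    obtain ⟨k, hk⟩ := ZMod.even_card_of_neg_mem hsym h0 hinv
    exact ⟨k + 1, by have := hS.card_pos; omega⟩
  let ψ := (ZMod.castHom (Dvd.intro 2 (mul_two m)) (ZMod m)).toAddMonoidHom
  have hψ (z : ZMod (m + m)) : ψ z = 0 ↔ z = 0 ∨ z = m := ZMod.cast_eq_zero_iff_of_add_self z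
  have hψS (s) (hs : s ∈ S) : ψ s ≠ 0 := fun h =>
    ((hψ s).mp h).elim (fun h => h0 (h ▸ hs)) (fun h => hinv (h ▸ hs))
  have hψSS (s) (hs : s ∈ S) (s') (hs' : s' ∈ S) (hne : s + s' ≠ 0) : ψ (s + s') ≠ 0 :=
    fun h => ((hψ _).mp h).elim hne (hsum s hs s' hs')
  have hι := ZMod.natCast_val_injective (m := m) (k := m + 1) (by omega)
  let φ : (cayley (m + m) S).Coloring (ZMod (m + 1)) :=
    Coloring.mk (fun x => ((ψ x).val : ZMod (m + 1)))
      fun h => hι.ne (cayley_map_ne_of_adj ψ hsym h0 hψS h)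
  refine totalChromaticNumber_le
    ((isTotalColoring_top_add (ZMod.finEquiv (m + 1)).symm.toEquiv
      (ZMod.add_self_injective hodd)).comap φ ?_)
  exact fun u a b ha hb hab => hι.ne (cayley_map_ne_of_adj_of_adj ψ hsym h0 hψSS ha hb hab)

/-- Theorem 3.2: a circulant graph of even order `n` with connection set `S` of size
`n/2 - 2`, with `n/2 ∉ S` and `s + s' ≠ n/2` for all `s, s' ∈ S`, has
`χ''(G) ≤ n/2 + 1 = Δ + 3`. -/
theorem circulant_half_minus_two (n : ℕ) (hn : 0 < n) (heven : Even n)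
    (S : Finset (ZMod n)) (hsym : ∀ s ∈ S, -s ∈ S) (h0 : (0 : ZMod n) ∉ S)
    (hcard : S.card = n / 2 - 2) (hinv : ((n / 2 : ℕ) : ZMod n) ∉ S)
    (hsum : ∀ s ∈ S, ∀ s' ∈ S, s + s' ≠ ((n / 2 : ℕ) : ZMod n)) :
    totalChromaticNumber (cayley n S) ≤ n / 2 + 1 :=
  circulant_half_minus_two_general n heven S hsym h0 hcard hinv hsum
end

section
/- The power of cycle C_21^6 has total chromatic number at most 14, i.e., it satisfies the Total Coloring Conjecture: χ''(C_21^6) ≤ Δ(C_21^6) + 2 = 14. -/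
open SimpleGraph

/-
For `m = k + 1` odd, the complete graph `K_m` on `ZMod m` has the total coloring with `m` colors
giving vertex `x` the color `2x` and edge `xy` the color `x + y`. If `m ∣ n`, reduction modulo
`m` maps `C_n^k` onto `K_m`, so this coloring pulls back to a total coloring of `C_n^k` except
that a vertex `u` has two edges over each edge of `K_m` at `u`: those to `u + j` and
`u + j - m` with `1 ≤ j ≤ k`. Their lengths `j` and `m - j` have opposite parity, so tagging
each edge with the parity of its length gives a total coloring with `2m = Δ + 2` colors.
`C_21^6` is the case `n = 21`, `k = 6`.
-/

theorem totalChromaticNumber_le_card {V C : Type*} [Fintype C] (G : SimpleGraph V)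
    (cv : V → C) (ce : V → V → C) (hce : ∀ u v, ce u v = ce v u)
    (hvert : ∀ u v, G.Adj u v → cv u ≠ cv v)
    (hedge : ∀ u v w, G.Adj u v → G.Adj u w → v ≠ w → ce u v ≠ ce u w)
    (hinc : ∀ u v, G.Adj u v → ce u v ≠ cv u) :
    totalChromaticNumber G ≤ Fintype.card C := by
  let f := Fintype.equivFin C
  let ce' : Sym2 V → C := Sym2.lift ⟨ce, hce⟩
  refine Nat.sInf_le ⟨f ∘ cv, f ∘ ce', fun u v huv => f.injective.ne (hvert u v huv), ?_, ?_⟩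
  · rintro e₁ he₁ e₂ he₂ hne ⟨u, hu₁, hu₂⟩
    obtain ⟨v, rfl⟩ := Sym2.mem_iff_exists.1 hu₁
    obtain ⟨w, rfl⟩ := Sym2.mem_iff_exists.1 hu₂
    exact f.injective.ne (hedge u v w he₁ he₂ (by rintro rfl; exact hne rfl))
  · intro e he u hu
    obtain ⟨v, rfl⟩ := Sym2.mem_iff_exists.1 hu
    exact f.injective.ne (hinc u v he)

theorem Int.natAbs_mod_two_ne_of_dvd_sub {k : ℕ} (hk : Even k) {a b : ℤ} (ha : a.natAbs ≤ k)
    (hb : b.natAbs ≤ k) (hne : a ≠ b) (hdvd : ((k + 1 : ℕ) : ℤ) ∣ b - a) :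
    a.natAbs % 2 ≠ b.natAbs % 2 := by
  obtain ⟨c, hc⟩ := hdvd
  push_cast at hc
  have hc' : c = 1 ∨ c = -1 := by
    obtain ⟨hk₀, ha₁, ha₂, hb₁, hb₂⟩ :
        (0 : ℤ) ≤ k ∧ -(k : ℤ) ≤ a ∧ a ≤ k ∧ -(k : ℤ) ≤ b ∧ b ≤ k := by omega
    rcases lt_trichotomy c 0 with h | rfl | h
    · right; nlinarith
    · omega
    · left; nlinarith
  obtain ⟨r, rfl⟩ := hk
  rcases hc' with rfl | rfl <;> omega

namespace ZMod

theorem natAbs_valMinAbs_natCast_le (n j : ℕ) : (j : ZMod n).valMinAbs.natAbs ≤ j := by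
  rcases n with _ | n
  · rfl
  · simpa using natAbs_min_of_le_div_two (n + 1) _ j (by simp [coe_valMinAbs])
      (natAbs_valMinAbs_le _)

theorem castHom_eq_intCast_valMinAbs {m n : ℕ} (h : m ∣ n) (x : ZMod n) :
    castHom h (ZMod m) x = x.valMinAbs := by
  rw [← map_intCast (castHom h (ZMod m)), coe_valMinAbs]

end ZMod

namespace powerOfCycle

variable {n k : ℕ}

theorem natAbs_valMinAbs_sub_le_of_adj {x y : ZMod n} (h : (powerOfCycle n k).Adj x y) :
    (y - x).valMinAbs.natAbs ≤ k := by
  obtain ⟨-, ⟨j, -, hjk, hxy⟩ | ⟨j, -, hjk, hxy⟩⟩ := (fromRel_adj _ _ _).1 h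
  · rw [← neg_sub, ZMod.natAbs_valMinAbs_neg, hxy]
    exact (ZMod.natAbs_valMinAbs_natCast_le n j).trans hjk
  · rw [hxy]
    exact (ZMod.natAbs_valMinAbs_natCast_le n j).trans hjk

theorem castHom_ne_of_adj (hdvd : k + 1 ∣ n) {x y : ZMod n} (h : (powerOfCycle n k).Adj x y) :
    ZMod.castHom hdvd (ZMod (k + 1)) x ≠ ZMod.castHom hdvd (ZMod (k + 1)) y := by
  rw [ne_comm, ← sub_ne_zero, ← map_sub, ZMod.castHom_eq_intCast_valMinAbs hdvd, Ne,
    ZMod.intCast_zmod_eq_zero_iff_dvd]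
  intro hdvd'
  have hle := natAbs_valMinAbs_sub_le_of_adj h
  have hzero := Int.eq_zero_of_dvd_of_natAbs_lt_natAbs hdvd' (by omega)
  rw [ZMod.valMinAbs_eq_zero, sub_eq_zero] at hzero
  exact h.ne hzero.symm

theorem parity_ne_of_castHom_eq (hdvd : k + 1 ∣ n) (hk : Even k) {u v w : ZMod n}
    (hv : (powerOfCycle n k).Adj u v) (hw : (powerOfCycle n k).Adj u w) (hvw : v ≠ w)
    (h : ZMod.castHom hdvd (ZMod (k + 1)) v = ZMod.castHom hdvd (ZMod (k + 1)) w) :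
    (v - u).valMinAbs.natAbs % 2 ≠ (w - u).valMinAbs.natAbs % 2 := by
  refine Int.natAbs_mod_two_ne_of_dvd_sub hk (natAbs_valMinAbs_sub_le_of_adj hv)
    (natAbs_valMinAbs_sub_le_of_adj hw) (by simpa [ZMod.valMinAbs_inj] using hvw) ?_
  rw [← ZMod.intCast_eq_intCast_iff_dvd_sub, ← ZMod.castHom_eq_intCast_valMinAbs hdvd,
    ← ZMod.castHom_eq_intCast_valMinAbs hdvd, map_sub, map_sub, h]

end powerOfCycle

theorem totalChromaticNumber_powerOfCycle_le {n k : ℕ} (hk : Even k) (hdvd : k + 1 ∣ n) :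
    totalChromaticNumber (powerOfCycle n k) ≤ 2 * k + 2 := by
  set π := ZMod.castHom hdvd (ZMod (k + 1))
  have h2 : IsUnit (2 : ZMod (k + 1)) := by
    simpa using (ZMod.isUnit_iff_coprime 2 (k + 1)).2 (Nat.coprime_two_left.2 hk.add_one)
  calc totalChromaticNumber (powerOfCycle n k)
      ≤ Fintype.card (ZMod (k + 1) × ZMod 2) :=
        totalChromaticNumber_le_card _ (fun x => (2 * π x, 0))
          (fun x y => (π x + π y, ((y - x).valMinAbs.natAbs : ZMod 2))) ?_ ?_ ?_ ?_
    _ = 2 * k + 2 := by rw [Fintype.card_prod, ZMod.card, ZMod.card]; ring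
  · intro x y
    rw [add_comm (π x), ← neg_sub y x, ZMod.natAbs_valMinAbs_neg]
  · intro x y h hxy
    exact powerOfCycle.castHom_ne_of_adj hdvd h (h2.mul_left_cancel (Prod.ext_iff.1 hxy).1)
  · intro u v w hv hw hvw
    simp only [ne_eq, Prod.mk.injEq, add_right_inj, not_and]
    intro h
    rw [ZMod.natCast_eq_natCast_iff']
    exact powerOfCycle.parity_ne_of_castHom_eq hdvd hk hv hw hvw h
  · intro u v h huv
    have : π u + π v = π u + π u := by rw [← two_mul]; exact (Prod.ext_iff.1 huv).1
    exact powerOfCycle.castHom_ne_of_adj hdvd h (add_left_cancel this).symm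

/-- Example 2.1: `χ''(C_21^6) ≤ Δ + 2 = 14`. -/
theorem powerOfCycle_21_6 : totalChromaticNumber (powerOfCycle 21 6) ≤ 14 :=
  totalChromaticNumber_powerOfCycle_le (by decide) (by norm_num)
end

section
/- The power of cycle C_18^4 is type I and its equitable total chromatic number equals its total chromatic number: χ''_=(C_18^4) = χ''(C_18^4) = 9. -/
open SimpleGraph

/-!
Every vertex of `C_n^k` has the `2k` neighbours `x ± 1, …, x ± k`, so a total coloring needs at
least `2k + 1` colors. When `2k + 1 ∣ n`, reduce modulo `2k + 1` and color the vertex `x` by `2x`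
and the edge `xy` by `x + y`. Around a vertex `u` the edge to `u + d` gets `2u + d` and `u` itself
gets `2u + 0`, while the neighbour `u + d` gets `2u + 2d`; since `0 < |2d| ≤ 2k` and distinct
offsets `|d|, |d'| ≤ k` differ by at most `2k`, all these colors are distinct modulo `2k + 1`.
For `C_18^4` each of the nine color classes of this coloring has 2 vertices and 8 edges.
-/

theorem ZMod.intCast_ne_zero_of_abs_lt {m : ℕ} {a : ℤ} (ha : a ≠ 0) (ham : |a| < m) :
    (a : ZMod m) ≠ 0 := by
  rw [Ne, ZMod.intCast_zmod_eq_zero_iff_dvd]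
  exact fun hdvd => ha (Int.eq_zero_of_abs_lt_dvd hdvd ham)

section TotalColoring

variable {V : Type*} {G : SimpleGraph V} {t : ℕ} {cv : V → Fin t} {ce : Sym2 V → Fin t}

theorem IsTotalColoring.card_lt_of_forall_adj (h : IsTotalColoring G cv ce) {v : V}
    {s : Finset V} (hs : ∀ w ∈ s, G.Adj v w) : s.card < t := by
  obtain ⟨-, hedge, hvert⟩ := h
  have hinj : Set.InjOn (fun w => ce s(v, w)) s := by
    intro a ha b hb hab
    by_contra hne
    exact hedge _ (hs a ha) _ (hs b hb) (mt Sym2.congr_right.mp hne)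
      ⟨v, Sym2.mem_mk_left _ _, Sym2.mem_mk_left _ _⟩ hab
  have hfresh : cv v ∉ s.image (fun w => ce s(v, w)) := by
    simp only [Finset.mem_image, not_exists, not_and]
    exact fun w hw => hvert _ (hs w hw) v (Sym2.mem_mk_left _ _)
  calc s.card < (insert (cv v) (s.image fun w => ce s(v, w))).card := by
        rw [Finset.card_insert_of_notMem hfresh, Finset.card_image_of_injOn hinj]
        exact Nat.lt_succ_self _
    _ ≤ t := (Finset.card_le_univ _).trans_eq (Fintype.card_fin t)

theorem IsEquitableTotalColoring.equitableTotalChromaticNumber_eq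
    (h : IsEquitableTotalColoring G cv ce) (ht : totalChromaticNumber G = t) :
    equitableTotalChromaticNumber G = t :=
  le_antisymm (Nat.sInf_le ⟨cv, ce, h⟩) <|
    le_csInf ⟨t, cv, ce, h⟩ fun _ ⟨cv', ce', h'⟩ => ht ▸ Nat.sInf_le ⟨cv', ce', h'.1⟩

end TotalColoring

section PowerOfCycle

variable {n k : ℕ}

theorem powerOfCycle_adj_iff {x y : ZMod n} :
    (powerOfCycle n k).Adj x y ↔ x ≠ y ∧ ∃ d : ℤ, d ≠ 0 ∧ |d| ≤ k ∧ y = x + d := by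
  rw [powerOfCycle, fromRel_adj, and_congr_right_iff]
  intro _
  constructor
  · rintro (⟨j, hj1, hjk, hxy⟩ | ⟨j, hj1, hjk, hyx⟩)
    · refine ⟨-j, by omega, by rw [abs_neg, Nat.abs_cast]; exact_mod_cast hjk, ?_⟩
      push_cast
      linear_combination -hxy
    · refine ⟨j, by omega, by rw [Nat.abs_cast]; exact_mod_cast hjk, ?_⟩
      push_cast
      linear_combination hyx
  · rintro ⟨d, hd0, hdk, rfl⟩
    obtain ⟨j, rfl | rfl⟩ := Int.eq_nat_or_neg d <;> simp only [abs_neg, Nat.abs_cast] at hdk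
    · exact Or.inr ⟨j, by omega, by omega, by push_cast; ring⟩
    · exact Or.inl ⟨j, by omega, by omega, by push_cast; ring⟩

theorem powerOfCycle_eq_cayley :
    powerOfCycle n k = cayley n ((Finset.Icc 1 k).image Nat.cast) := by
  ext x y
  simp [powerOfCycle, cayley, eq_comm, and_assoc]

theorem powerOfCycle.two_mul_lt_of_isTotalColoring (hn : 2 * k < n) {t : ℕ}
    {cv : ZMod n → Fin t} {ce : Sym2 (ZMod n) → Fin t}
    (h : IsTotalColoring (powerOfCycle n k) cv ce) : 2 * k < t := by
  let offsets := (Finset.Icc (-(k : ℤ)) k).erase 0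
  have hcast_inj : Set.InjOn (Int.cast : ℤ → ZMod n) offsets := by
    intro a ha b hb hab
    simp only [offsets, Finset.coe_erase, Set.mem_sdiff, Finset.coe_Icc, Set.mem_Icc] at ha hb
    by_contra hne
    refine ZMod.intCast_ne_zero_of_abs_lt (sub_ne_zero.mpr hne) ?_
      (by push_cast; exact sub_eq_zero.mpr hab)
    rw [abs_lt]
    omega
  have hadj : ∀ w ∈ offsets.image (Int.cast : ℤ → ZMod n), (powerOfCycle n k).Adj 0 w := by
    simp only [Finset.mem_image, offsets, Finset.mem_erase, Finset.mem_Icc]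
    rintro _ ⟨d, ⟨hd0, hdk⟩, rfl⟩
    refine powerOfCycle_adj_iff.mpr
      ⟨(ZMod.intCast_ne_zero_of_abs_lt hd0 ?_).symm, d, hd0, abs_le.mpr hdk, (zero_add _).symm⟩
    rw [abs_lt]
    omega
  have hcard : (offsets.image (Int.cast : ℤ → ZMod n)).card = 2 * k := by
    rw [Finset.card_image_of_injOn hcast_inj, Finset.card_erase_of_mem (by simp), Int.card_Icc]
    omega
  exact hcard ▸ h.card_lt_of_forall_adj hadj

end PowerOfCycle

section CyclicColoring

variable {n k : ℕ} (hdvd : 2 * k + 1 ∣ n)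

/-- `ZMod (2 * k + 1)` is `Fin (2 * k + 1)` by definition, so colors can be computed in the ring
`ZMod (2 * k + 1)`. -/
def powerOfCycle.vertexColor (x : ZMod n) : Fin (2 * k + 1) :=
  (2 * ZMod.castHom hdvd (ZMod (2 * k + 1)) x : ZMod (2 * k + 1))

def powerOfCycle.edgeColor : Sym2 (ZMod n) → Fin (2 * k + 1) :=
  Sym2.lift ⟨fun x y => (ZMod.castHom hdvd (ZMod (2 * k + 1)) x + ZMod.castHom hdvd _ y :
    ZMod (2 * k + 1)), fun _ _ => add_comm _ _⟩

theorem powerOfCycle.isTotalColoring_vertexColor_edgeColor :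
    IsTotalColoring (powerOfCycle n k) (vertexColor hdvd) (edgeColor hdvd) := by
  have hsmall : ∀ a : ℤ, a ≠ 0 → |a| ≤ 2 * k → (a : ZMod (2 * k + 1)) ≠ 0 := fun a ha hak =>
    ZMod.intCast_ne_zero_of_abs_lt ha (by push_cast; omega)
  refine ⟨?_, ?_, ?_⟩
  · intro x y hxy heq
    obtain ⟨-, d, hd0, hdk, rfl⟩ := powerOfCycle_adj_iff.mp hxy
    simp only [vertexColor, map_add, map_intCast] at heq
    refine hsmall (2 * d) (by omega) (by rw [abs_mul, abs_two]; omega) ?_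
    push_cast
    linear_combination -heq
  · rintro _ he₁ _ he₂ hne ⟨u, hu₁, hu₂⟩ heq
    obtain ⟨v, rfl⟩ := Sym2.mem_iff_exists.mp hu₁
    obtain ⟨w, rfl⟩ := Sym2.mem_iff_exists.mp hu₂
    obtain ⟨-, d, -, hdk, rfl⟩ := powerOfCycle_adj_iff.mp ((mem_edgeSet _).mp he₁)
    obtain ⟨-, d', -, hd'k, rfl⟩ := powerOfCycle_adj_iff.mp ((mem_edgeSet _).mp he₂)
    change (_ : ZMod (2 * k + 1)) = _ at heq
    simp only [edgeColor, Sym2.lift_mk, map_add, map_intCast] at heq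
    have hdd' : d ≠ d' := by rintro rfl; exact hne rfl
    refine hsmall (d - d') (sub_ne_zero.mpr hdd') (by rw [abs_le] at hdk hd'k ⊢; omega) ?_
    push_cast
    linear_combination heq
  · intro e he u hu heq
    obtain ⟨v, rfl⟩ := Sym2.mem_iff_exists.mp hu
    obtain ⟨-, d, hd0, hdk, rfl⟩ := powerOfCycle_adj_iff.mp ((mem_edgeSet _).mp he)
    change (_ : ZMod (2 * k + 1)) = _ at heq
    simp only [edgeColor, vertexColor, Sym2.lift_mk, map_add, map_intCast] at heq
    refine hsmall d hd0 (by omega) ?_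
    linear_combination heq

end CyclicColoring

theorem totalChromaticNumber_powerOfCycle {n k : ℕ} [NeZero n] (hdvd : 2 * k + 1 ∣ n) :
    totalChromaticNumber (powerOfCycle n k) = 2 * k + 1 := by
  refine IsLeast.csInf_eq ⟨⟨_, _, powerOfCycle.isTotalColoring_vertexColor_edgeColor hdvd⟩, ?_⟩
  rintro t ⟨cv, ce, h⟩
  have hkn : 2 * k + 1 ≤ n := Nat.le_of_dvd (NeZero.pos n) hdvd
  exact powerOfCycle.two_mul_lt_of_isTotalColoring (by omega) h

theorem powerOfCycle.totalClassSize_vertexColor_edgeColor_18_4 (hdvd : 2 * 4 + 1 ∣ 18)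
    (c : Fin 9) :
    totalClassSize (powerOfCycle 18 4) (vertexColor hdvd) (edgeColor hdvd) c = 10 := by
  unfold totalClassSize
  rw [powerOfCycle_eq_cayley, Set.ncard_eq_toFinset_card', Set.ncard_eq_toFinset_card']
  decide +revert

/-- Example 2.2: `C_18^4` is type I with `χ''_=(C_18^4) = χ''(C_18^4) = 9`. -/
theorem powerOfCycle_18_4_equitable :
    equitableTotalChromaticNumber (powerOfCycle 18 4) = 9 ∧
    totalChromaticNumber (powerOfCycle 18 4) = 9 := by
  have hdvd : 2 * 4 + 1 ∣ 18 := by norm_num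
  have hχ : totalChromaticNumber (powerOfCycle 18 4) = 9 :=
    totalChromaticNumber_powerOfCycle hdvd
  have hclass := powerOfCycle.totalClassSize_vertexColor_edgeColor_18_4 hdvd
  have hequitable : IsEquitableTotalColoring (powerOfCycle 18 4)
      (powerOfCycle.vertexColor hdvd) (powerOfCycle.edgeColor hdvd) :=
    ⟨powerOfCycle.isTotalColoring_vertexColor_edgeColor hdvd, fun c c' => by
      rw [hclass c, hclass c']; omega⟩
  exact ⟨hequitable.equitableTotalChromaticNumber_eq hχ, hχ⟩
end

section
/- Let G be the circulant graph Cay(Z_24, S) with connection set S = {1, 3, 4, 5, 10, 14, 19, 20, 21, 23}. Then the total chromatic number of G satisfies χ''(G) ≤ 13. -/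
open SimpleGraph

/-! For `m ∣ n`, reduce modulo `m`: colour the vertex `x` by `2x` and the edge `uv` by `u + v`.
The edges at `u` then get the colours `2u + s` for `s ∈ S`, so the colouring is total as soon
as `s ↦ s mod m` is injective on `S` and misses `0`, and `2s ≢ 0 (mod m)`. For the connection
set `{±1, ±3, ±4, ±5, ±10}` of `ZMod 24` and `m = 12`, the residues of `S` are the ten classes
other than `0` and `6`, and those of `2S` are the nonzero even ones. -/

theorem totalChromaticNumber_le_of_isTotalColoring {V : Type*} {G : SimpleGraph V} {t : ℕ}
    {cv : V → Fin t} {ce : Sym2 V → Fin t} (h : IsTotalColoring G cv ce) :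
    totalChromaticNumber G ≤ t :=
  Nat.sInf_le ⟨cv, ce, h⟩

theorem isTotalColoring_sym2Lift {V : Type*} {G : SimpleGraph V} {t : ℕ} (cv : V → Fin t)
    (f : V → V → Fin t) (hf : ∀ u v, f u v = f v u)
    (hv : ∀ u v, G.Adj u v → cv u ≠ cv v)
    (he : ∀ u v w, G.Adj u v → G.Adj u w → v ≠ w → f u v ≠ f u w)
    (hve : ∀ u v, G.Adj u v → f u v ≠ cv u) :
    IsTotalColoring G cv (Sym2.lift ⟨f, hf⟩) := by
  refine ⟨hv, ?_, ?_⟩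
  · rintro e₁ he₁ e₂ he₂ hne ⟨u, hu₁, hu₂⟩
    obtain ⟨v, rfl⟩ := Sym2.mem_iff_exists.mp hu₁
    obtain ⟨w, rfl⟩ := Sym2.mem_iff_exists.mp hu₂
    rw [Sym2.lift_mk, Sym2.lift_mk]
    exact he u v w he₁ he₂ fun hvw => hne (hvw ▸ rfl)
  · rintro e he u hu
    obtain ⟨v, rfl⟩ := Sym2.mem_iff_exists.mp hu
    exact hve u v he

section SumColoring

variable {V C : Type*} [AddCommGroup V] [AddCommGroup C] {G : SimpleGraph V} {S : Set V}

theorem isTotalColoring_of_addMonoidHom {t : ℕ} (φ : V →+ C) (ι : C ↪ Fin t)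
    (hadj : ∀ u v, G.Adj u v → v - u ∈ S) (hinj : Set.InjOn φ S)
    (hne : ∀ s ∈ S, φ s ≠ 0) (hne_two : ∀ s ∈ S, φ (s + s) ≠ 0) :
    IsTotalColoring G (fun x => ι (φ (x + x)))
      (Sym2.lift ⟨fun u v => ι (φ (u + v)),
        fun u v => congrArg (fun x => ι (φ x)) (add_comm u v)⟩) := by
  have hsub (u v : V) : φ (v - u) = φ (u + v) - φ (u + u) := by
    rw [← map_sub]; congr 1; abel
  refine isTotalColoring_sym2Lift _ _ _ ?_ ?_ ?_
  · intro u v huv h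
    apply hne_two _ (hadj u v huv)
    rw [show v - u + (v - u) = v + v - (u + u) by abel, map_sub, ι.injective h, sub_self]
  · intro u v w huv huw hvw h
    have : φ (v - u) = φ (w - u) := by rw [hsub, hsub, ι.injective h]
    exact hvw (sub_left_inj.mp (hinj (hadj u v huv) (hadj u w huw) this))
  · intro u v huv h
    exact hne _ (hadj u v huv) (by rw [hsub, ι.injective h, sub_self])

theorem totalChromaticNumber_le_card_of_addMonoidHom [Fintype C] (φ : V →+ C)
    (hadj : ∀ u v, G.Adj u v → v - u ∈ S) (hinj : Set.InjOn φ S)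
    (hne : ∀ s ∈ S, φ s ≠ 0) (hne_two : ∀ s ∈ S, φ (s + s) ≠ 0) :
    totalChromaticNumber G ≤ Fintype.card C :=
  totalChromaticNumber_le_of_isTotalColoring <|
    isTotalColoring_of_addMonoidHom φ (Fintype.equivFin C).toEmbedding hadj hinj hne hne_two

end SumColoring

theorem cayley_adj_sub_mem {n : ℕ} {S : Finset (ZMod n)} (hS : ∀ s ∈ S, -s ∈ S)
    {u v : ZMod n} (h : (cayley n S).Adj u v) : v - u ∈ S := by
  obtain ⟨-, h | h⟩ := h
  · simpa using hS _ h
  · exact h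

/-- Example 3.2: the circulant graph on `ZMod 24` with connection set
`{1,3,4,5,10,14,19,20,21,23}` has `χ''(G) ≤ 13`. -/
theorem circulant_24_example (S : Finset (ZMod 24))
    (hS : S = {1, 3, 4, 5, 10, 14, 19, 20, 21, 23}) :
    totalChromaticNumber (cayley 24 S) ≤ 13 := by
  let φ : ZMod 24 →+ ZMod 12 := ZMod.castHom (by norm_num : 12 ∣ 24) (ZMod 12)
  have hsymm : ∀ s ∈ S, -s ∈ S := by subst hS; decide
  have hinj : ∀ a ∈ S, ∀ b ∈ S, φ a = φ b → a = b := by subst hS; decide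
  have hne : ∀ s ∈ S, φ s ≠ 0 := by subst hS; decide
  have hne_two : ∀ s ∈ S, φ (s + s) ≠ 0 := by subst hS; decide
  calc totalChromaticNumber (cayley 24 S)
      ≤ Fintype.card (ZMod 12) :=
        totalChromaticNumber_le_card_of_addMonoidHom φ (fun _ _ => cayley_adj_sub_mem hsymm)
          (fun a ha b hb => hinj a ha b hb) hne hne_two
    _ ≤ 13 := by simp
end
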